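/- arXiv:2303.02391 — 4 statements merged into one kernel-verified Lean document; each statement's English description precedes it below -/
import Mathlib

section
/- Let N ≥ 1, let q = (q_1,…,q_N) ∈ ℂ^N and z ∈ ℂ. Then the determinant of the generalized Vandermonde matrix Ξ(z,q) equals det Ξ(z,q) = N·z·∏_{1 ≤ j < i ≤ N} (q_i − q_j). -/
/-!
With `x_j = z + q̄_j`, the transpose of `Ξ(z,q)` is the Vandermonde matrix of `x` whose last
column `x^{N-1}` is replaced by `x^N`. Each `x_j` is a root of the monic `∏_k (X - x_k)`, so
`x_j^N` is a combination of the lower powers of `x_j` with coefficients independent of `j`; in the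
determinant only the `x^{N-1}` term survives, with coefficient `Σ_k x_k = N z` since
`Σ_k q̄_k = 0`.
The remaining Vandermonde determinant is invariant under the translation `x = q + const`.
-/

open Matrix Finset
open scoped Kronecker

noncomputable section

/-- `ρ(i)`: in 1-based terms ρ(i) = i−1 for 1 ≤ i ≤ N−1 and ρ(N) = N. -/
def rho (N : ℕ) (i : Fin N) : ℕ := if (i : ℕ) = N - 1 then N else (i : ℕ)

/-- `q̄_j = q_j − (1/N)·Σ_k q_k`. -/
def qbar (N : ℕ) (q : Fin N → ℂ) (j : Fin N) : ℂ := q j - (∑ k, q k) / N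

/-- The generalized Vandermonde matrix `Ξ(z,q)` with entries `(z + q̄_j)^{ρ(i)}`. -/
def Xi (N : ℕ) (z : ℂ) (q : Fin N → ℂ) : Matrix (Fin N) (Fin N) ℂ :=
  Matrix.of fun i j => (z + qbar N q j) ^ rho N i

/-- The diagonal matrix `D(q)` with `D_{ii}(q) = ∏_{k≠i}(q_i − q_k)`. -/
def Dmat (N : ℕ) (q : Fin N → ℂ) : Matrix (Fin N) (Fin N) ℂ :=
  Matrix.diagonal fun i => ∏ k ∈ Finset.univ.erase i, (q i - q k)

/-- The IRF-Vertex transformation matrix `g(z,q) = Ξ(z,q)·D(q)⁻¹`. -/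
def gmat (N : ℕ) (z : ℂ) (q : Fin N → ℂ) : Matrix (Fin N) (Fin N) ℂ :=
  Xi N z q * (Dmat N q)⁻¹

open Polynomial in
theorem Polynomial.Monic.pow_natDegree_eq_of_isRoot {R : Type*} [CommRing R] {p : R[X]}
    (hp : p.Monic) {a : R} (ha : p.IsRoot a) :
    a ^ p.natDegree = ∑ i ∈ range p.natDegree, -p.coeff i * a ^ i := by
  have h := congrArg (eval a) hp.as_sum
  simp only [ha.eq_zero, eval_add, eval_pow, eval_X, eval_finsetSum, eval_mul, eval_C] at h
  simp only [neg_mul, sum_neg_distrib]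
  linear_combination -h

open Polynomial in
theorem Matrix.det_vandermonde_updateCol_last_pow {R : Type*} [CommRing R] {n : ℕ}
    (v : Fin (n + 1) → R) :
    ((vandermonde v).updateCol (Fin.last n) fun k => v k ^ (n + 1)).det =
      (∑ i, v i) * (vandermonde v).det := by
  nontriviality R
  set P : R[X] := ∏ k, (X - C (v k))
  have hdeg : P.natDegree = n + 1 := by simp [P]
  have hcol : (fun k => v k ^ (n + 1)) =
      fun k => ∑ i : Fin (n + 1), -P.coeff i • vandermonde v k i := by
    funext k
    have hroot : P.IsRoot (v k) := by
      simpa [P, IsRoot, eval_prod] using prod_eq_zero (mem_univ k) (sub_self (v k))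
    have hmonic : P.Monic := monic_prod_of_monic _ _ fun k _ => monic_X_sub_C (v k)
    have hreduce := hmonic.pow_natDegree_eq_of_isRoot hroot
    rw [hdeg, ← Fin.sum_univ_eq_sum_range] at hreduce
    exact hreduce
  have hcoeff : P.coeff n = -∑ i, v i := by
    simpa using prod_X_sub_C_coeff_card_pred univ v (by simp)
  rw [hcol, det_updateCol_sum, Fin.val_last, hcoeff, neg_neg, smul_eq_mul]

theorem Matrix.det_vandermonde_eq_prod_lt {R : Type*} [CommRing R] {n : ℕ} (v : Fin n → R) :
    (vandermonde v).det = ∏ i, ∏ j ∈ univ.filter (· < i), (v i - v j) := by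
  rw [det_vandermonde]
  exact prod_comm' (by simp)

theorem sum_qbar {N : ℕ} (hN : N ≠ 0) (q : Fin N → ℂ) : ∑ j, qbar N q j = 0 := by
  simp only [qbar, sum_sub_distrib, sum_const, card_univ, Fintype.card_fin, nsmul_eq_mul]
  rw [mul_div_cancel₀ _ (Nat.cast_ne_zero.mpr hN), sub_self]

theorem Xi_transpose (n : ℕ) (z : ℂ) (q : Fin (n + 1) → ℂ) :
    (Xi (n + 1) z q)ᵀ = (vandermonde fun j => z + qbar (n + 1) q j).updateCol (Fin.last n)
      fun k => (z + qbar (n + 1) q k) ^ (n + 1) := by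
  ext k i
  rcases Fin.eq_castSucc_or_eq_last i with ⟨i, rfl⟩ | rfl
  · simp [Xi, rho, vandermonde_apply, i.is_lt.ne]
  · simp [Xi, rho]

/-- For `N ≥ 1`, `q ∈ ℂ^N`, `z ∈ ℂ`:
`det Ξ(z,q) = N·z·∏_{1 ≤ j < i ≤ N}(q_i − q_j)`. -/
theorem det_Xi (N : ℕ) (hN : 1 ≤ N) (z : ℂ) (q : Fin N → ℂ) :
    (Xi N z q).det =
      (N : ℂ) * z * ∏ i, ∏ j ∈ Finset.univ.filter (fun j => j < i), (q i - q j) := by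
  obtain ⟨n, rfl⟩ := Nat.exists_eq_add_of_le' hN
  have hshift : (fun j => z + qbar (n + 1) q j) =
      fun j => q j + (z - (∑ k, q k) / (n + 1 : ℕ)) := by
    funext j; simp only [qbar]; ring
  rw [← det_transpose, Xi_transpose, det_vandermonde_updateCol_last_pow, sum_add_distrib,
    sum_qbar n.succ_ne_zero, hshift, det_vandermonde_add, det_vandermonde_eq_prod_lt]
  simp
end
end

section
/- Let N ≥ 2 and let x_1,…,x_N ∈ ℂ be pairwise distinct with Σ_{s=1}^N x_s ≠ 0. Let Ξ(x) ∈ Mat_N(ℂ) have entries Ξ_{ij}(x) = x_j^{ρ(i)}, and define A ∈ Mat_N(ℂ) by A_{kj} = (−1)^{ρ(j)} · [ σ_{ρ(j)}(x) / ( (Σ_{s=1}^N x_s)·∏_{s≠k}(x_k − x_s) ) − σ^{(k)}_{ρ(j)}(x) / ∏_{s≠k}(x_k − x_s) ]. Then A is the two-sided inverse of Ξ(x): Ξ(x)·A = 1_N and A·Ξ(x) = 1_N. -/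
open Matrix Finset
open scoped Kronecker

noncomputable section

/-- The elementary-symmetric-type functions `σ_k(x)`, defined by
`∏_{k=1}^N (ζ − x_k) = Σ_{k=0}^N (−1)^k ζ^k σ_k(x)`, i.e.
`σ_k(x) = (−1)^k · [ζ^k] ∏_i (ζ − x_i)`. -/
def sigma (N : ℕ) (x : Fin N → ℂ) (k : ℕ) : ℂ :=
  (-1 : ℂ) ^ k * (∏ i, (Polynomial.X - Polynomial.C (x i))).coeff k

/-- The functions `σ^{(m)}_s(x)`, defined by
`−∏_{k≠m}(ζ − x_k) = Σ_{s=0}^{N−1} (−1)^s ζ^s σ^{(m)}_s(x)`, i.e.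
`σ^{(m)}_s(x) = (−1)^{s+1} · [ζ^s] ∏_{i≠m} (ζ − x_i)`. -/
def sigmam (N : ℕ) (x : Fin N → ℂ) (m : Fin N) (s : ℕ) : ℂ :=
  (-1 : ℂ) ^ (s + 1) * (∏ i ∈ Finset.univ.erase m, (Polynomial.X - Polynomial.C (x i))).coeff s

/-- The generalized Vandermonde matrix `Ξ(x)` with entries `Ξ_{ij}(x) = x_j^{ρ(i)}`. -/
def XiV (N : ℕ) (x : Fin N → ℂ) : Matrix (Fin N) (Fin N) ℂ :=
  Matrix.of fun i j => (x j) ^ rho N i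

/-- The claimed inverse `A` of `Ξ(x)`:
`A_{kj} = (−1)^{ρ(j)}·[σ_{ρ(j)}(x)/((Σ_s x_s)·∏_{s≠k}(x_k−x_s)) − σ^{(k)}_{ρ(j)}(x)/∏_{s≠k}(x_k−x_s)]`. -/
def XiVinv (N : ℕ) (x : Fin N → ℂ) : Matrix (Fin N) (Fin N) ℂ :=
  Matrix.of fun k j => (-1 : ℂ) ^ rho N j *
    (sigma N x (rho N j) / ((∑ s, x s) * ∏ s ∈ Finset.univ.erase k, (x k - x s))
      - sigmam N x k (rho N j) / ∏ s ∈ Finset.univ.erase k, (x k - x s))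

/-- For `N ≥ 2` and pairwise distinct `x_1,…,x_N` with `Σ_s x_s ≠ 0`,
the matrix `A = XiVinv` is the two-sided inverse of `Ξ(x)`. -/
theorem XiV_inverse (N : ℕ) (hN : 2 ≤ N) (x : Fin N → ℂ) (hx : Function.Injective x)
    (hsum : (∑ s, x s) ≠ 0) :
    XiV N x * XiVinv N x = 1 ∧ XiVinv N x * XiV N x = 1 := by
  obtain ⟨n, rfl⟩ : ∃ n, N = n + 2 := ⟨N - 2, by omega⟩
  set S : ℂ := ∑ s, x s with hS
  set P : Polynomial ℂ := ∏ i, (Polynomial.X - Polynomial.C (x i)) with hPdef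
  -- sum over rho
  have hsumrho : ∀ f : ℕ → ℂ, ∑ i : Fin (n+2), f (rho (n+2) i) =
      (∑ m ∈ Finset.range (n+1), f m) + f (n+2) := by
    intro f
    rw [Fin.sum_univ_castSucc]
    congr 1
    · rw [← Fin.sum_univ_eq_sum_range]
      refine Finset.sum_congr rfl fun i _ => ?_
      have : rho (n+2) (Fin.castSucc i) = (i : ℕ) := by
        simp only [rho, Fin.coe_castSucc]
        exact if_neg (by omega)
      rw [this]
    · simp [rho]
  have heval : ∀ (q : Polynomial ℂ) (z : ℂ), q.natDegree < n + 3 →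
      ∑ i : Fin (n+2), q.coeff (rho (n+2) i) * z ^ (rho (n+2) i)
        = q.eval z - q.coeff (n+1) * z ^ (n+1) := by
    intro q z hq
    rw [hsumrho fun m => q.coeff m * z ^ m,
      Polynomial.eval_eq_sum_range' hq,
      Finset.sum_range_succ (n := n + 2), Finset.sum_range_succ (n := n + 1)]
    ring
  have hPdeg : P.natDegree = n + 2 := by
    rw [hPdef, Polynomial.natDegree_prod]
    · simp
    · intro i _; exact Polynomial.X_sub_C_ne_zero _
  have hPcoeff : P.coeff (n+1) = -S := by
    have := Polynomial.prod_X_sub_C_coeff_card_pred (univ : Finset (Fin (n+2))) x (by simp)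
    simpa using this
  have key : XiVinv (n+2) x * XiV (n+2) x = 1 := by
    ext k j
    set Q : Polynomial ℂ := ∏ i ∈ Finset.univ.erase k, (Polynomial.X - Polynomial.C (x i)) with hQdef
    set Pk : ℂ := ∏ s ∈ Finset.univ.erase k, (x k - x s) with hPk
    have hPkne : Pk ≠ 0 := by
      rw [hPk]
      refine Finset.prod_ne_zero_iff.mpr fun s hs => ?_
      exact sub_ne_zero.mpr fun h => (Finset.mem_erase.mp hs).1 (hx h).symm
    have hQmonic : Q.Monic := Polynomial.monic_prod_of_monic _ _
      (fun i _ => Polynomial.monic_X_sub_C _)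
    have hQdeg : Q.natDegree = n + 1 := by
      rw [hQdef, Polynomial.natDegree_prod]
      · simp [Finset.card_erase_of_mem]
      · intro i _; exact Polynomial.X_sub_C_ne_zero _
    have hQcoeff : Q.coeff (n+1) = 1 := by
      have := hQmonic.coeff_natDegree
      rwa [hQdeg] at this
    have hQeval : Q.eval (x j) = if k = j then Pk else 0 := by
      split_ifs with h
      · subst h
        rw [hQdef, Polynomial.eval_prod, hPk]
        simp
      · rw [hQdef, Polynomial.eval_prod]
        apply Finset.prod_eq_zero (Finset.mem_erase.mpr ⟨fun hh => h hh.symm, Finset.mem_univ j⟩)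
        simp
    have hPeval : P.eval (x j) = 0 := by
      rw [hPdef, Polynomial.eval_prod]
      exact Finset.prod_eq_zero (Finset.mem_univ j) (by simp)
    rw [Matrix.mul_apply]
    have hterm : ∀ i : Fin (n+2), XiVinv (n+2) x k i * XiV (n+2) x i j =
        (P.coeff (rho (n+2) i) * x j ^ (rho (n+2) i)) / (S * Pk)
          + (Q.coeff (rho (n+2) i) * x j ^ (rho (n+2) i)) / Pk := by
      intro i
      simp only [XiVinv, XiV, Matrix.of_apply, sigma, sigmam, ← hPdef, ← hQdef, ← hPk, ← hS]
      have h1 : (-1 : ℂ) ^ rho (n+2) i * (-1 : ℂ) ^ rho (n+2) i = 1 := by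
        rw [← pow_add, ← two_mul, pow_mul]; norm_num
      linear_combination (P.coeff (rho (n+2) i) * x j ^ (rho (n+2) i) / (S * Pk)
        + Q.coeff (rho (n+2) i) * x j ^ (rho (n+2) i) / Pk) * h1
    rw [Finset.sum_congr rfl fun i _ => hterm i, Finset.sum_add_distrib,
      ← Finset.sum_div, ← Finset.sum_div, heval P _ (by omega), heval Q _ (by rw [hQdeg]; omega),
      hPeval, hPcoeff, hQeval, hQcoeff]
    rw [Matrix.one_apply]
    split_ifs with h
    · field_simp
      ring
    · field_simp
      ring
  exact ⟨mul_eq_one_comm.mp key, key⟩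
end
end

section
/- Let N ≥ 2, let ℏ, z ∈ ℂ with ℏ ≠ 0 and z ≠ 0, and let q_1,…,q_N ∈ ℂ be pairwise distinct. Then the dynamical rational GL_N R-matrix satisfies the skew-symmetry property R^{dyn}(ℏ,z|q) = −P_{12}·R^{dyn}(−ℏ,−z|q)·P_{12} and the unitarity property R^{dyn}(ℏ,z|q) · ( P_{12}·R^{dyn}(ℏ,−z|q)·P_{12} ) = (1/ℏ² − 1/z²)·(1_N ⊗ 1_N). -/
/-!
Write `W` for the diagonal matrix with entries `N / (q_i - q_j)` on `E_ii ⊗ E_jj`. Then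
`R^{dyn}(ℏ,z|q) = ℏ⁻¹ + z⁻¹ P₁₂ + W (1 - P₁₂)`, and `P₁₂ W = -W P₁₂` because the weights are
antisymmetric in `(i, j)`. Hence `Q = W (1 - P₁₂)` satisfies `P₁₂ Q = Q`, `Q P₁₂ = -Q` and
`Q² = W² (1 - P₁₂²) = 0`, and both identities follow from these relations together with
`P₁₂² = 1` by a computation valid in any algebra.
-/

open Matrix Finset
open scoped Kronecker

noncomputable section

/-- The matrix unit `E_{ij}`. -/
def Eu (N : ℕ) (i j : Fin N) : Matrix (Fin N) (Fin N) ℂ := Matrix.single i j 1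

/-- The permutation operator `P_{12} = Σ_{i,j} E_{ij} ⊗ E_{ji}`. -/
def Pmat (N : ℕ) : Matrix (Fin N × Fin N) (Fin N × Fin N) ℂ :=
  ∑ i, ∑ j, Eu N i j ⊗ₖ Eu N j i

/-- The dynamical rational GL_N R-matrix `R^{dyn}(ℏ,z|q)`. -/
def Rdyn (N : ℕ) (hb z : ℂ) (q : Fin N → ℂ) : Matrix (Fin N × Fin N) (Fin N × Fin N) ℂ :=
  (∑ i, ∑ j ∈ Finset.univ.erase i, (1/z + (N : ℂ)/(q j - q i)) • (Eu N i j ⊗ₖ Eu N j i))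
  + (∑ i, ∑ j ∈ Finset.univ.erase i, (1/hb + (N : ℂ)/(q i - q j)) • (Eu N i i ⊗ₖ Eu N j j))
  + (1/z + 1/hb) • ∑ i, Eu N i i ⊗ₖ Eu N i i


section Involution

variable {A : Type*} [Ring A] {P W : A}

theorem mul_one_sub_mul_of_mul_self_eq_one (hP : P * P = 1) (W : A) :
    W * (1 - P) * P = -(W * (1 - P)) := by
  rw [mul_assoc, sub_mul, hP, one_mul, ← neg_sub, mul_neg]

theorem mul_mul_one_sub_of_mul_eq_neg (hP : P * P = 1) (hPW : P * W = -(W * P)) :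
    P * (W * (1 - P)) = W * (1 - P) := by
  rw [← mul_assoc, hPW, neg_mul, mul_assoc, mul_sub, hP, mul_one, ← neg_sub, mul_neg, neg_neg]

theorem mul_one_sub_mul_self_of_mul_eq_neg (hP : P * P = 1) (hPW : P * W = -(W * P)) :
    W * (1 - P) * (W * (1 - P)) = 0 := by
  have hW : (1 - P) * W = W * (1 + P) := by
    rw [sub_mul, hPW, one_mul, mul_add, mul_one, sub_neg_eq_add]
  calc W * (1 - P) * (W * (1 - P)) = W * ((1 - P) * W) * (1 - P) := by noncomm_ring
    _ = W * W * (1 - P * P) := by rw [hW]; noncomm_ring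
    _ = 0 := by rw [hP, sub_self, mul_zero]

variable {K : Type*} [CommRing K] [Algebra K A] {Q : A}

theorem conj_smul_one_add_smul_add (hP : P * P = 1) (hPQ : P * Q = Q) (hQP : Q * P = -Q)
    (h z : K) : P * (h • 1 + z • P + Q) * P = h • 1 + z • P - Q := by
  simp only [mul_add, add_mul, mul_smul_comm, smul_mul_assoc, mul_one, hP, one_mul, hPQ, hQP,
    sub_eq_add_neg]

theorem mul_conj_smul_one_add_smul_add (hP : P * P = 1) (hPQ : P * Q = Q) (hQP : Q * P = -Q)
    (hQQ : Q * Q = 0) (h z : K) :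
    (h • 1 + z • P + Q) * (P * (h • 1 + (-z) • P + Q) * P) = (h ^ 2 - z ^ 2) • 1 := by
  rw [conj_smul_one_add_smul_add hP hPQ hQP]
  simp only [add_mul, mul_add, mul_sub, smul_mul_assoc, mul_smul_comm, one_mul, mul_one, hP, hPQ,
    hQP, hQQ]
  module

end Involution

theorem Eu_kronecker_Eu (N : ℕ) (i j k l : Fin N) :
    Eu N i j ⊗ₖ Eu N k l = single (i, k) (j, l) 1 := by
  rw [Eu, Eu, single_kronecker_single, mul_one]

theorem Pmat_apply (N : ℕ) (x y : Fin N × Fin N) :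
    Pmat N x y = if x.swap = y then 1 else 0 := by
  obtain ⟨a, b⟩ := x
  obtain ⟨c, d⟩ := y
  simp [Pmat, Eu_kronecker_Eu, Matrix.sum_apply, single_apply, Prod.ext_iff, ite_and]

theorem Pmat_mul_apply (N : ℕ) (M : Matrix (Fin N × Fin N) (Fin N × Fin N) ℂ)
    (x y : Fin N × Fin N) : (Pmat N * M) x y = M x.swap y := by
  simp [mul_apply, Pmat_apply]

theorem Pmat_mul_self (N : ℕ) : Pmat N * Pmat N = 1 := by
  ext x y
  simp [Pmat_mul_apply, Pmat_apply, one_apply]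

theorem Pmat_mul_diagonal (N : ℕ) (w : Fin N × Fin N → ℂ) :
    Pmat N * diagonal w = diagonal (w ∘ Prod.swap) * Pmat N := by
  ext x y
  rw [Pmat_mul_apply, diagonal_mul, Pmat_apply, diagonal_apply, Function.comp_apply, mul_ite,
    mul_one, mul_zero]

def Wdyn (N : ℕ) (q : Fin N → ℂ) : Matrix (Fin N × Fin N) (Fin N × Fin N) ℂ :=
  diagonal fun x => (N : ℂ) / (q x.1 - q x.2)

theorem Pmat_mul_Wdyn (N : ℕ) (q : Fin N → ℂ) : Pmat N * Wdyn N q = -(Wdyn N q * Pmat N) := by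
  have hw : ((fun x : Fin N × Fin N => (N : ℂ) / (q x.1 - q x.2)) ∘ Prod.swap) =
      fun x => -((N : ℂ) / (q x.1 - q x.2)) := by
    ext x
    simp only [Function.comp_apply, Prod.fst_swap, Prod.snd_swap, ← neg_sub (q x.1),
      div_neg]
  rw [Wdyn, Pmat_mul_diagonal, hw, ← diagonal_neg, neg_mul]

/-- Lean's `x / 0 = 0` makes the weight of `Wdyn` vanish for `i = j`, where `Rdyn` has the
separate term `(1/z + 1/ℏ) E_ii ⊗ E_ii`. -/
theorem Rdyn_eq (N : ℕ) (hb z : ℂ) (q : Fin N → ℂ) :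
    Rdyn N hb z q = hb⁻¹ • 1 + z⁻¹ • Pmat N + Wdyn N q * (1 - Pmat N) := by
  ext ⟨a, b⟩ ⟨c, d⟩
  simp only [Rdyn, Wdyn, one_div, Eu_kronecker_Eu, smul_single, smul_eq_mul, mul_one, mem_univ,
    sum_erase_eq_sub, sub_self, div_zero, add_zero, sum_sub_distrib, Matrix.add_apply,
    Matrix.sub_apply, Matrix.sum_apply, single_apply, Prod.ext_iff, ite_and, sum_ite_irrel,
    sum_ite_eq', ↓reduceIte, sum_const_zero, Matrix.smul_apply, mul_ite, mul_zero, mul_sub,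
    one_apply, Pmat_apply, Prod.swap_prod_mk, diagonal_apply, diagonal_mul]
  rw [← neg_sub (q a) (q b), div_neg]
  split_ifs <;> subst_vars <;> ring

theorem Rdyn_skew_unitarity_general (N : ℕ) (hb z : ℂ) (q : Fin N → ℂ) :
    Rdyn N hb z q = -(Pmat N * Rdyn N (-hb) (-z) q * Pmat N) ∧
    Rdyn N hb z q * (Pmat N * Rdyn N hb (-z) q * Pmat N) =
      (1 / hb ^ 2 - 1 / z ^ 2) •
        ((1 : Matrix (Fin N) (Fin N) ℂ) ⊗ₖ (1 : Matrix (Fin N) (Fin N) ℂ)) := by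
  have hP := Pmat_mul_self N
  have hPQ := mul_mul_one_sub_of_mul_eq_neg hP (Pmat_mul_Wdyn N q)
  have hQP := mul_one_sub_mul_of_mul_self_eq_one hP (Wdyn N q)
  have hQQ := mul_one_sub_mul_self_of_mul_eq_neg hP (Pmat_mul_Wdyn N q)
  simp only [Rdyn_eq, inv_neg]
  constructor
  · rw [conj_smul_one_add_smul_add hP hPQ hQP]
    module
  · rw [mul_conj_smul_one_add_smul_add hP hPQ hQP hQQ, one_kronecker_one, one_div, one_div,
      inv_pow, inv_pow]

/-- Skew-symmetry and unitarity of the dynamical rational GL_N R-matrix: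
`R^{dyn}(ℏ,z|q) = −P₁₂·R^{dyn}(−ℏ,−z|q)·P₁₂` and
`R^{dyn}(ℏ,z|q)·(P₁₂·R^{dyn}(ℏ,−z|q)·P₁₂) = (1/ℏ² − 1/z²)·(1_N ⊗ 1_N)`. -/
theorem Rdyn_skew_unitarity (N : ℕ) (hN : 2 ≤ N) (hb z : ℂ) (hhb : hb ≠ 0) (hz : z ≠ 0)
    (q : Fin N → ℂ) (hq : Function.Injective q) :
    Rdyn N hb z q = -(Pmat N * Rdyn N (-hb) (-z) q * Pmat N) ∧
    Rdyn N hb z q * (Pmat N * Rdyn N hb (-z) q * Pmat N) =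
      (1 / hb ^ 2 - 1 / z ^ 2) •
        ((1 : Matrix (Fin N) (Fin N) ℂ) ⊗ₖ (1 : Matrix (Fin N) (Fin N) ℂ)) :=
  Rdyn_skew_unitarity_general N hb z q
end
end

section
/- Let N ≥ 2, let ℏ, z_1, z_2 ∈ ℂ with ℏ ≠ 0, z_1 ≠ z_2, z_1 ≠ 0, z_2 ≠ 0, z_1 + ℏ ≠ 0, z_2 + ℏ ≠ 0, and let q_1,…,q_N ∈ ℂ be pairwise distinct. Then the semi-dynamical rational GL_N R-matrix satisfies the skew-symmetry property R^{sd}(ℏ,z_1,z_2|q) = −P_{12} · R^{sd}(−ℏ, z_2+ℏ, z_1+ℏ | q) · P_{12}. -/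
/-!
Conjugation by `P₁₂` swaps the two tensor factors. Applied to `R^{sd}(-ℏ, z₂+ℏ, z₁+ℏ)` it
exchanges the families `E_{ij} ⊗ E_{jj}` and `E_{jj} ⊗ E_{ij}`, whose coefficients
`1/(z₁+ℏ)` and `1/((z₂+ℏ)-ℏ)` are exactly those of `R^{sd}(ℏ, z₁, z₂)` while the signs in front
of the two sums are exchanged. On the families `E_{ij} ⊗ E_{ji}` and `E_{ii} ⊗ E_{jj}` it amounts
to exchanging `i ↔ j`, which turns `1/(z₂-z₁)`, `1/(-ℏ)` and `N/(q_i-q_j)` into the negatives of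
`1/(z₁-z₂)`, `1/ℏ` and `N/(q_j-q_i)`; the diagonal coefficient changes sign as well.
-/

open Matrix Finset
open scoped Kronecker

noncomputable section

/-- The semi-dynamical rational GL_N R-matrix `R^{sd}(ℏ,z_1,z_2|q)`. -/
def Rsd (N : ℕ) (hb z1 z2 : ℂ) (q : Fin N → ℂ) : Matrix (Fin N × Fin N) (Fin N × Fin N) ℂ :=
  (∑ i, ∑ j ∈ Finset.univ.erase i, (1/(z1 - z2) + (N : ℂ)/(q j - q i)) • (Eu N i j ⊗ₖ Eu N j i))
  + (∑ i, ∑ j ∈ Finset.univ.erase i, (1/hb + (N : ℂ)/(q j - q i)) • (Eu N i i ⊗ₖ Eu N j j))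
  - (∑ i, ∑ j ∈ Finset.univ.erase i, (1/(z1 + hb) + (N : ℂ)/(q j - q i)) • (Eu N i j ⊗ₖ Eu N j j))
  + (∑ i, ∑ j ∈ Finset.univ.erase i, (1/z2 + (N : ℂ)/(q j - q i)) • (Eu N j j ⊗ₖ Eu N i j))
  + (1/(z1 - z2) + 1/z2 + 1/hb - 1/(z1 + hb)) • ∑ i, Eu N i i ⊗ₖ Eu N i i

theorem Finset.sum_sum_erase_comm {ι M : Type*} [Fintype ι] [DecidableEq ι] [AddCommMonoid M]
    (f : ι → ι → M) :
    ∑ i, ∑ j ∈ univ.erase i, f i j = ∑ i, ∑ j ∈ univ.erase i, f j i :=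
  Finset.sum_comm' fun i j => by simp [ne_comm]

theorem Finset.sum_sum_erase_smul_swap {ι R M : Type*} [Fintype ι] [DecidableEq ι] [Ring R]
    [AddCommGroup M] [Module R M] (a b : ι → ι → R) (X : ι → ι → M)
    (h : ∀ i j, a j i = -b i j) :
    ∑ i, ∑ j ∈ univ.erase i, a i j • X j i = -∑ i, ∑ j ∈ univ.erase i, b i j • X i j := by
  rw [Finset.sum_sum_erase_comm]
  simp only [h, neg_smul, Finset.sum_neg_distrib]

theorem one_div_add_div_sub_eq_neg {K : Type*} [DivisionRing K] {w w' : K} (hw : w' = -w)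
    (a x y : K) : 1 / w' + a / (x - y) = -(1 / w + a / (y - x)) := by
  rw [hw, ← neg_sub y x, div_neg, div_neg, neg_add]

theorem Matrix.kronecker_submatrix_swap {l m n p R : Type*} [CommMagma R]
    (A : Matrix l m R) (B : Matrix n p R) :
    (A ⊗ₖ B).submatrix Prod.swap Prod.swap = B ⊗ₖ A := by
  ext ⟨i, j⟩ ⟨k, l⟩
  exact mul_comm _ _

theorem Pmat_eq_toMatrix (N : ℕ) :
    Pmat N = (Equiv.prodComm (Fin N) (Fin N)).toPEquiv.toMatrix := by
  ext ⟨a, b⟩ ⟨c, d⟩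
  simp only [Pmat, Eu, Matrix.sum_apply, kroneckerMap_apply, single_apply, ite_and, mul_ite,
    mul_one, mul_zero, sum_ite_eq', mem_univ, ↓reduceIte, PEquiv.toMatrix_apply,
    Equiv.toPEquiv_apply, Equiv.prodComm_apply, Prod.swap_prod_mk, Option.mem_def,
    Option.some.injEq, Prod.mk.injEq]
  grind

theorem Pmat_mul_mul_Pmat (N : ℕ) (M : Matrix (Fin N × Fin N) (Fin N × Fin N) ℂ) :
    Pmat N * M * Pmat N =
      reindexLinearEquiv ℂ ℂ (Equiv.prodComm _ _) (Equiv.prodComm _ _) M := by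
  rw [Pmat_eq_toMatrix, PEquiv.toMatrix_toPEquiv_mul, PEquiv.mul_toMatrix_toPEquiv,
    submatrix_submatrix]
  rfl

theorem Rsd_skew_symmetry_general (N : ℕ) (hb z1 z2 : ℂ) (q : Fin N → ℂ) :
    Rsd N hb z1 z2 q = -(Pmat N * Rsd N (-hb) (z2 + hb) (z1 + hb) q * Pmat N) := by
  rw [Pmat_mul_mul_Pmat, Rsd, Rsd]
  simp only [map_add, map_sub, map_smul, map_sum, coe_reindexLinearEquiv, reindex_apply,
    Equiv.prodComm_symm, Equiv.coe_prodComm, kronecker_submatrix_swap, add_neg_cancel_right,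
    add_sub_add_right_eq_sub]
  have h_ij_ji : ∑ i, ∑ j ∈ univ.erase i,
        (1 / (z2 - z1) + (N : ℂ) / (q j - q i)) • (Eu N j i ⊗ₖ Eu N i j)
      = -∑ i, ∑ j ∈ univ.erase i,
        (1 / (z1 - z2) + (N : ℂ) / (q j - q i)) • (Eu N i j ⊗ₖ Eu N j i) :=
    sum_sum_erase_smul_swap _ _ _ fun _ _ => one_div_add_div_sub_eq_neg (neg_sub z1 z2).symm _ _ _
  have h_ii_jj : ∑ i, ∑ j ∈ univ.erase i,
        (1 / -hb + (N : ℂ) / (q j - q i)) • (Eu N j j ⊗ₖ Eu N i i)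
      = -∑ i, ∑ j ∈ univ.erase i,
        (1 / hb + (N : ℂ) / (q j - q i)) • (Eu N i i ⊗ₖ Eu N j j) :=
    sum_sum_erase_smul_swap _ _ _ fun _ _ => one_div_add_div_sub_eq_neg rfl _ _ _
  have h_scalar : 1 / (z2 - z1) + 1 / (z1 + hb) + 1 / -hb - 1 / z2
      = -(1 / (z1 - z2) + 1 / z2 + 1 / hb - 1 / (z1 + hb)) := by
    rw [← neg_sub z1 z2, div_neg, div_neg]
    ring
  rw [h_ij_ji, h_ii_jj, h_scalar, neg_smul]
  abel

/-- Skew-symmetry of the semi-dynamical rational GL_N R-matrix: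
`R^{sd}(ℏ,z_1,z_2|q) = −P₁₂·R^{sd}(−ℏ,z_2+ℏ,z_1+ℏ|q)·P₁₂`. -/
theorem Rsd_skew_symmetry (N : ℕ) (hN : 2 ≤ N) (hb z1 z2 : ℂ) (hhb : hb ≠ 0)
    (h12 : z1 ≠ z2) (hz1 : z1 ≠ 0) (hz2 : z2 ≠ 0)
    (hz1p : z1 + hb ≠ 0) (hz2p : z2 + hb ≠ 0)
    (q : Fin N → ℂ) (hq : Function.Injective q) :
    Rsd N hb z1 z2 q = -(Pmat N * Rsd N (-hb) (z2 + hb) (z1 + hb) q * Pmat N) :=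
  Rsd_skew_symmetry_general N hb z1 z2 q
end
end
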